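/- arXiv:1006.3909 — 2 statements merged into one kernel-verified Lean document; each statement's English description precedes it below -/
import Mathlib

section
/- For every odd integer n ≥ 3, the twisted cube TQ_n contains two vertex-disjoint paths P and Q of equal length whose vertex sets partition V(TQ_n), with start(P) = 00(0)^{n-3}1, end(P) = 01(0)^{n-3}1, start(Q) = 00(0)^{n-3}0, and end(Q) = 11(0)^{n-3}0. -/
/-!
`TQ_{n+2}` consists of four copies of `TQ_n`, indexed by the two leading bits. If `P : a → b`
and `Q : c → d` are equal node-disjoint paths covering `TQ_n`, where `a` has odd and `c` even
parity, run each of them through all four copies, alternately forwards and backwards, and join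
consecutive copies by cross edges. The two new paths again have equal length and cover
`TQ_{n+2}`, and they start at the copies of `a` and `c` in `TQ^{00}`, which have the same
parities. Starting from the two one-vertex paths of `TQ_1 = K_2`, this produces the paths of
the theorem in every `TQ_n` with `n ≥ 3`.
-/

/-- Parity function `P i b = b_i ⊕ b_{i-1} ⊕ ... ⊕ b_0`. -/
def parityFn {n : ℕ} (b : Fin n → Bool) (i : ℕ) : Bool :=
  decide ((((List.range (i+1)).filter fun j => if h : j < n then b ⟨j, h⟩ else false).length) % 2 = 1)

/-- The low-order `2k+1` bits of a binary string of length `2(k+1)+1`. -/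
def lowBits {k : ℕ} (b : Fin (2*(k+1)+1) → Bool) : Fin (2*k+1) → Bool :=
  fun i => b (Fin.castLE (by omega) i)

/-- The cross-edge relation in the twisted cube `TQ_{2(k+1)+1}`:
`b'` is a cross-edge neighbor of `b`. -/
def crossRel (k : ℕ) (b b' : Fin (2*(k+1)+1) → Bool) : Prop :=
  lowBits b' = lowBits b ∧
  ((b' ⟨2*k+2, by omega⟩ = !b ⟨2*k+2, by omega⟩ ∧ b' ⟨2*k+1, by omega⟩ = b ⟨2*k+1, by omega⟩) ∨
   (parityFn b (2*k) = false ∧ b' ⟨2*k+2, by omega⟩ = !b ⟨2*k+2, by omega⟩ ∧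
      b' ⟨2*k+1, by omega⟩ = !b ⟨2*k+1, by omega⟩) ∨
   (parityFn b (2*k) = true ∧ b' ⟨2*k+2, by omega⟩ = b ⟨2*k+2, by omega⟩ ∧
      b' ⟨2*k+1, by omega⟩ = !b ⟨2*k+1, by omega⟩))

/-- The twisted cube `TQ_n` for odd `n = 2k+1`, on vertex set the binary
strings of length `n` (bit `i` of `b` is `b i`). -/
def TwistedCube : (k : ℕ) → SimpleGraph (Fin (2*k+1) → Bool)
  | 0 => ⊤
  | (k+1) =>
    { Adj := fun b b' => b ≠ b' ∧
        ((b ⟨2*k+2, by omega⟩ = b' ⟨2*k+2, by omega⟩ ∧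
          b ⟨2*k+1, by omega⟩ = b' ⟨2*k+1, by omega⟩ ∧
          (TwistedCube k).Adj (lowBits b) (lowBits b')) ∨
         crossRel k b b' ∨ crossRel k b' b)
      symm := ⟨by
        rintro b b' ⟨hne, h⟩
        refine ⟨hne.symm, ?_⟩
        rcases h with ⟨h1, h2, h3⟩ | h | h
        · exact Or.inl ⟨h1.symm, h2.symm, (TwistedCube k).symm.symm _ _ h3⟩
        · exact Or.inr (Or.inr h)
        · exact Or.inr (Or.inl h)⟩
      loopless := ⟨fun b h => h.1 rfl⟩ }

namespace SimpleGraph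

variable {V W : Type*} {G : SimpleGraph V} {H : SimpleGraph W}

def Walk.IsEqualDisjointPathCover {a b c d : V} (P : G.Walk a b) (Q : G.Walk c d) : Prop :=
  P.IsPath ∧ Q.IsPath ∧ P.support.length = Q.support.length ∧
    (∀ v, v ∈ P.support → v ∉ Q.support) ∧ (∀ v, v ∈ P.support ∨ v ∈ Q.support)

theorem Walk.IsEqualDisjointPathCover.copy {a b c d a' b' c' d' : V} {P : G.Walk a b}
    {Q : G.Walk c d} (h : P.IsEqualDisjointPathCover Q) (ha : a = a') (hb : b = b')
    (hc : c = c') (hd : d = d') :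
    (P.copy ha hb).IsEqualDisjointPathCover (Q.copy hc hd) := by
  subst ha hb hc hd
  exact h

theorem Walk.isEqualDisjointPathCover_nil_nil {a c : V} (hac : a ≠ c)
    (hV : ∀ v, v = a ∨ v = c) :
    (Walk.nil : G.Walk a a).IsEqualDisjointPathCover (Walk.nil : G.Walk c c) := by
  refine ⟨.nil, .nil, rfl, ?_, ?_⟩ <;> simp [hac, hV]

namespace Walk

def snake {u v : V} (p : G.Walk u v) (f : Fin 4 → G →g H)
    (h₀ : H.Adj (f 0 v) (f 1 v)) (h₁ : H.Adj (f 1 u) (f 2 u)) (h₂ : H.Adj (f 2 v) (f 3 v)) :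
    H.Walk (f 0 u) (f 3 u) :=
  (p.map (f 0)).append <| .cons h₀ <| (p.map (f 1)).reverse.append <| .cons h₁ <|
    (p.map (f 2)).append <| .cons h₂ (p.map (f 3)).reverse

variable {u v : V} (p : G.Walk u v) (f : Fin 4 → G →g H)
    (h₀ : H.Adj (f 0 v) (f 1 v)) (h₁ : H.Adj (f 1 u) (f 2 u)) (h₂ : H.Adj (f 2 v) (f 3 v))

theorem support_snake : (p.snake f h₀ h₁ h₂).support =
    p.support.map (f 0) ++ (p.support.map (f 1)).reverse ++ p.support.map (f 2) ++
      (p.support.map (f 3)).reverse := by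
  simp [snake, support_append, support_reverse, support_map]

theorem length_support_snake :
    (p.snake f h₀ h₁ h₂).support.length = 4 * p.support.length := by
  simp only [support_snake, List.length_append, List.length_reverse, List.length_map]
  ring

theorem mem_support_snake {x : W} :
    x ∈ (p.snake f h₀ h₁ h₂).support ↔ ∃ i, ∃ y ∈ p.support, f i y = x := by
  simp [support_snake, Fin.exists_fin_succ]

theorem isPath_snake (hp : p.IsPath) (hf : ∀ i, Function.Injective (f i))
    (hdisj : Pairwise fun i j => ∀ x y, f i x ≠ f j y) : (p.snake f h₀ h₁ h₂).IsPath := by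
  rw [isPath_def, support_snake]
  simp only [List.nodup_append, List.nodup_reverse, List.mem_append, List.mem_reverse,
    List.mem_map, forall_exists_index, and_imp, forall_apply_eq_imp_iff₂, or_imp, forall_and]
  have hnodup (i : Fin 4) : (p.support.map (f i)).Nodup := hp.support_nodup.map (hf i)
  have hd (i j : Fin 4) (hij : i ≠ j) : ∀ x ∈ p.support, ∀ y ∈ p.support, f i x ≠ f j y :=
    fun x _ y _ => hdisj hij x y
  exact ⟨⟨⟨hnodup 0, hnodup 1, hd 0 1 (by decide)⟩, hnodup 2, hd 0 2 (by decide),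
    hd 1 2 (by decide)⟩, hnodup 3, ⟨hd 0 3 (by decide), hd 1 3 (by decide)⟩, hd 2 3 (by decide)⟩

end Walk

end SimpleGraph

open SimpleGraph Walk

namespace TwistedCube

theorem adj_succ {k : ℕ} {b b' : Fin (2*(k+1)+1) → Bool} :
    (TwistedCube (k+1)).Adj b b' ↔ b ≠ b' ∧
      ((b ⟨2*k+2, by omega⟩ = b' ⟨2*k+2, by omega⟩ ∧
          b ⟨2*k+1, by omega⟩ = b' ⟨2*k+1, by omega⟩ ∧
          (TwistedCube k).Adj (lowBits b) (lowBits b')) ∨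
        crossRel k b b' ∨ crossRel k b' b) := Iff.rfl

/-- `lift k (i, j) x` is the copy of `x` in the subcube `TQ^{ij}`: its two leading bits are
`b_{2k+2} = i` and `b_{2k+1} = j`. -/
def lift (k : ℕ) (p : Bool × Bool) (x : Fin (2*k+1) → Bool) : Fin (2*(k+1)+1) → Bool :=
  fun t => if h : (t : ℕ) < 2*k+1 then x ⟨t, h⟩ else if (t : ℕ) = 2*k+1 then p.2 else p.1

variable {k : ℕ}

@[simp] theorem lowBits_lift (p : Bool × Bool) (x : Fin (2*k+1) → Bool) :
    lowBits (lift k p x) = x := by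
  funext t
  simp [lowBits, lift, t.isLt]

@[simp] theorem lift_apply_top (p : Bool × Bool) (x : Fin (2*k+1) → Bool) :
    lift k p x ⟨2*k+2, by omega⟩ = p.1 := by
  simp [lift]

@[simp] theorem lift_apply_snd (p : Bool × Bool) (x : Fin (2*k+1) → Bool) :
    lift k p x ⟨2*k+1, by omega⟩ = p.2 := by
  simp [lift]

theorem lift_lowBits (b : Fin (2*(k+1)+1) → Bool) :
    lift k (b ⟨2*k+2, by omega⟩, b ⟨2*k+1, by omega⟩) (lowBits b) = b := by
  funext ⟨t, ht⟩
  simp only [lift, lowBits]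
  split_ifs <;> congr 1 <;> ext <;> simp <;> omega

theorem lift_eq_lift_iff {p p' : Bool × Bool} {x x' : Fin (2*k+1) → Bool} :
    lift k p x = lift k p' x' ↔ p = p' ∧ x = x' := by
  refine ⟨fun h => ⟨Prod.ext ?_ ?_, ?_⟩, fun ⟨hp, hx⟩ => hp ▸ hx ▸ rfl⟩
  · simpa using congrFun h ⟨2*k+2, by omega⟩
  · simpa using congrFun h ⟨2*k+1, by omega⟩
  · simpa using congrArg lowBits h

theorem parityFn_lift (p : Bool × Bool) (x : Fin (2*k+1) → Bool) :
    parityFn (lift k p x) (2*k) = parityFn x (2*k) := by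
  unfold parityFn
  have hlow : ∀ j ∈ List.range (2*k+1),
      (if h : j < 2*(k+1)+1 then lift k p x ⟨j, h⟩ else false) =
        if h : j < 2*k+1 then x ⟨j, h⟩ else false := by
    intro j hj
    rw [List.mem_range] at hj
    simp [lift, hj, show j < 2*(k+1)+1 by omega]
  rw [List.filter_congr hlow]

def liftHom (k : ℕ) (p : Bool × Bool) : TwistedCube k →g TwistedCube (k+1) where
  toFun := lift k p
  map_rel' {x y} h := adj_succ.mpr
    ⟨fun hxy => h.ne (lift_eq_lift_iff.mp hxy).2,
      Or.inl ⟨by simp, by simp, by simpa using h⟩⟩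

@[simp] theorem liftHom_apply (p : Bool × Bool) (x : Fin (2*k+1) → Bool) :
    liftHom k p x = lift k p x := rfl

theorem adj_lift_of_crossRel {p p' : Bool × Bool} {x : Fin (2*k+1) → Bool} (hp : p ≠ p')
    (h : crossRel k (lift k p x) (lift k p' x)) :
    (TwistedCube (k+1)).Adj (lift k p x) (lift k p' x) :=
  adj_succ.mpr ⟨fun he => hp (lift_eq_lift_iff.mp he).1, Or.inr (Or.inl h)⟩

theorem adj_lift_not_fst (p : Bool × Bool) (x : Fin (2*k+1) → Bool) :
    (TwistedCube (k+1)).Adj (lift k p x) (lift k (!p.1, p.2) x) :=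
  adj_lift_of_crossRel (by simp [Prod.ext_iff]) ⟨by simp, Or.inl ⟨by simp, by simp⟩⟩

theorem adj_lift_not_both (p : Bool × Bool) {x : Fin (2*k+1) → Bool}
    (hx : parityFn x (2*k) = false) :
    (TwistedCube (k+1)).Adj (lift k p x) (lift k (!p.1, !p.2) x) :=
  adj_lift_of_crossRel (by simp [Prod.ext_iff])
    ⟨by simp, Or.inr (Or.inl ⟨by rwa [parityFn_lift], by simp, by simp⟩)⟩

theorem adj_lift_not_snd (p : Bool × Bool) {x : Fin (2*k+1) → Bool}
    (hx : parityFn x (2*k) = true) :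
    (TwistedCube (k+1)).Adj (lift k p x) (lift k (p.1, !p.2) x) :=
  adj_lift_of_crossRel (by simp [Prod.ext_iff])
    ⟨by simp, Or.inr (Or.inr ⟨by rwa [parityFn_lift], by simp, by simp⟩)⟩

section Snake

variable {c : Fin 4 → Bool × Bool} {u v : Fin (2*k+1) → Bool} (P : (TwistedCube k).Walk u v)
  {h₀ : (TwistedCube (k+1)).Adj (liftHom k (c 0) v) (liftHom k (c 1) v)}
  {h₁ : (TwistedCube (k+1)).Adj (liftHom k (c 1) u) (liftHom k (c 2) u)}
  {h₂ : (TwistedCube (k+1)).Adj (liftHom k (c 2) v) (liftHom k (c 3) v)}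

theorem mem_support_snake_liftHom (hc : Function.Surjective c) {b : Fin (2*(k+1)+1) → Bool} :
    b ∈ (P.snake (fun i => liftHom k (c i)) h₀ h₁ h₂).support ↔
      lowBits b ∈ P.support := by
  rw [mem_support_snake]
  constructor
  · rintro ⟨i, y, hy, rfl⟩
    simpa using hy
  · intro hb
    obtain ⟨i, hi⟩ := hc (b ⟨2*k+2, by omega⟩, b ⟨2*k+1, by omega⟩)
    exact ⟨i, lowBits b, hb, by simp [hi, lift_lowBits]⟩

theorem isPath_snake_liftHom (hc : Function.Injective c) (hP : P.IsPath) :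
    (P.snake (fun i => liftHom k (c i)) h₀ h₁ h₂).IsPath :=
  isPath_snake P _ _ _ _ hP (fun _ _ _ h => (lift_eq_lift_iff.mp h).2)
    fun _ _ hij _ _ h => hij (hc (lift_eq_lift_iff.mp h).1)

theorem isEqualDisjointPathCover_snake_liftHom {c' : Fin 4 → Bool × Bool}
    {u' v' : Fin (2*k+1) → Bool} {Q : (TwistedCube k).Walk u' v'}
    {g₀ : (TwistedCube (k+1)).Adj (liftHom k (c' 0) v') (liftHom k (c' 1) v')}
    {g₁ : (TwistedCube (k+1)).Adj (liftHom k (c' 1) u') (liftHom k (c' 2) u')}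
    {g₂ : (TwistedCube (k+1)).Adj (liftHom k (c' 2) v') (liftHom k (c' 3) v')}
    (hc : c.Bijective) (hc' : c'.Bijective) (h : P.IsEqualDisjointPathCover Q) :
    (P.snake (fun i => liftHom k (c i)) h₀ h₁ h₂).IsEqualDisjointPathCover
      (Q.snake (fun i => liftHom k (c' i)) g₀ g₁ g₂) := by
  obtain ⟨hP, hQ, hlen, hdisj, hcover⟩ := h
  refine ⟨isPath_snake_liftHom P hc.1 hP, isPath_snake_liftHom Q hc'.1 hQ,
    by rw [length_support_snake, length_support_snake, hlen], fun b hb => ?_, fun b => ?_⟩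
  · rw [mem_support_snake_liftHom P hc.2] at hb
    rw [mem_support_snake_liftHom Q hc'.2]
    exact hdisj _ hb
  · rw [mem_support_snake_liftHom P hc.2, mem_support_snake_liftHom Q hc'.2]
    exact hcover _

end Snake

/- `P` runs through the copies `00, 10, 11, 01` and `Q` through `00, 10, 01, 11`, alternating
direction. The linking cross edges flip the leading bit (always an edge), the second bit at `a`
(an edge as `a` has odd parity) or both bits at `c` (an edge as `c` has even parity). -/
theorem exists_isEqualDisjointPathCover_succ {a b c d : Fin (2*k+1) → Bool}
    {P : (TwistedCube k).Walk a b} {Q : (TwistedCube k).Walk c d}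
    (h : P.IsEqualDisjointPathCover Q) (ha : parityFn a (2*k) = true)
    (hc : parityFn c (2*k) = false) :
    ∃ (P' : (TwistedCube (k+1)).Walk (lift k (false, false) a) (lift k (false, true) a))
      (Q' : (TwistedCube (k+1)).Walk (lift k (false, false) c) (lift k (true, true) c)),
      P'.IsEqualDisjointPathCover Q' :=
  ⟨_, _, isEqualDisjointPathCover_snake_liftHom
    (c := ![(false, false), (true, false), (true, true), (false, true)])
    (c' := ![(false, false), (true, false), (false, true), (true, true)])
    (h₀ := adj_lift_not_fst _ _) (h₁ := adj_lift_not_snd _ ha) (h₂ := adj_lift_not_fst _ _)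
    (g₀ := adj_lift_not_fst _ _) (g₁ := adj_lift_not_both _ hc) (g₂ := adj_lift_not_fst _ _)
    P (by decide) (by decide) h⟩

theorem parityFn_decide {n i : ℕ} (q : ℕ → Prop) [DecidablePred q] (hi : i < n) :
    parityFn (fun t : Fin n => decide (q t)) i =
      decide (((Finset.range (i+1)).filter q).card % 2 = 1) := by
  unfold parityFn
  have hlow : ∀ j ∈ List.range (i+1),
      (if h : j < n then decide (q j) else false) = decide (q j) := by
    intro j hj
    rw [List.mem_range] at hj
    simp [show j < n by omega]
  rw [List.filter_congr hlow]
  rfl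

theorem lift_decide (p : Bool × Bool) (q r : ℕ → Prop) [DecidablePred q] [DecidablePred r]
    (hlow : ∀ t < 2*k+1, q t ↔ r t) (hsnd : p.2 = decide (r (2*k+1)))
    (htop : p.1 = decide (r (2*k+2))) :
    lift k p (fun t => decide (q t)) = fun t : Fin (2*(k+1)+1) => decide (r t) := by
  funext ⟨t, ht⟩
  simp only [lift]
  split_ifs with h₁ h₂
  · exact decide_eq_decide.mpr (hlow t h₁)
  · simp [hsnd, h₂]
  · obtain rfl : t = 2*k+2 := by omega
    exact htop

variable (k)

def startP : Fin (2*k+1) → Bool := fun i => decide ((i : ℕ) = 0)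

def endP : Fin (2*k+1) → Bool := fun i => decide ((i : ℕ) = 2*k-1 ∨ (i : ℕ) = 0)

def startQ : Fin (2*k+1) → Bool := fun _ => false

def endQ : Fin (2*k+1) → Bool := fun i => decide ((i : ℕ) = 2*k ∨ (i : ℕ) = 2*k-1)

theorem parityFn_startP : parityFn (startP k) (2*k) = true := by
  unfold startP
  rw [parityFn_decide (· = 0) (by omega), Finset.filter_eq', if_pos (by simp)]
  rfl

theorem parityFn_startQ : parityFn (startQ k) (2*k) = false := by
  unfold startQ
  simpa using parityFn_decide (n := 2*k+1) (fun _ => False) (by omega)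

theorem lift_startP : lift k (false, false) (startP k) = startP (k+1) :=
  lift_decide _ (· = 0) (· = 0) (fun _ _ => Iff.rfl) (by simp) (by simp)

theorem lift_startQ : lift k (false, false) (startQ k) = startQ (k+1) :=
  lift_decide _ (fun _ => False) (fun _ => False) (fun _ _ => Iff.rfl) (by simp) (by simp)

theorem lift_startP_eq_endP : lift k (false, true) (startP k) = endP (k+1) :=
  lift_decide _ (· = 0) (fun t => t = 2*(k+1)-1 ∨ t = 0) (fun _ _ => by omega)
    (by simp; omega) (by simp; omega)

theorem lift_startQ_eq_endQ : lift k (true, true) (startQ k) = endQ (k+1) :=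
  lift_decide _ (fun _ => False) (fun t => t = 2*(k+1) ∨ t = 2*(k+1)-1)
    (fun _ _ => ⟨False.elim, by omega⟩) (by simp; omega) (by simp; omega)

theorem exists_isEqualDisjointPathCover_from_start :
    ∃ (b d : Fin (2*k+1) → Bool) (P : (TwistedCube k).Walk (startP k) b)
      (Q : (TwistedCube k).Walk (startQ k) d), P.IsEqualDisjointPathCover Q := by
  induction k with
  | zero => exact ⟨_, _, .nil, .nil, isEqualDisjointPathCover_nil_nil (by decide) (by decide)⟩
  | succ k ih =>
    obtain ⟨_, _, P, Q, h⟩ := ih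
    obtain ⟨P', Q', h'⟩ :=
      exists_isEqualDisjointPathCover_succ h (parityFn_startP k) (parityFn_startQ k)
    exact ⟨_, _, P'.copy (lift_startP k) rfl, Q'.copy (lift_startQ k) rfl, h'.copy _ _ _ _⟩

end TwistedCube

open TwistedCube in
/-- For every odd `n = 2k+1 ≥ 3`, `TQ_n` contains two vertex-disjoint
paths `P` and `Q` of equal length whose vertex sets partition `V(TQ_n)`, with
`start(P) = 00(0)^{n-3}1`, `end(P) = 01(0)^{n-3}1`, `start(Q) = 00(0)^{n-3}0`,
`end(Q) = 11(0)^{n-3}0`. -/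
theorem twistedCube_two_equal_node_disjoint_paths (k : ℕ) (hk : 1 ≤ k) :
    ∃ (P : (TwistedCube k).Walk (fun i => decide ((i : ℕ) = 0))
        (fun i => decide ((i : ℕ) = 2*k-1 ∨ (i : ℕ) = 0)))
      (Q : (TwistedCube k).Walk (fun _ => false)
        (fun i => decide ((i : ℕ) = 2*k ∨ (i : ℕ) = 2*k-1))),
      P.IsPath ∧ Q.IsPath ∧
      P.support.length = Q.support.length ∧
      (∀ v, v ∈ P.support → v ∉ Q.support) ∧
      (∀ v : Fin (2*k+1) → Bool, v ∈ P.support ∨ v ∈ Q.support) := by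
  obtain ⟨m, rfl⟩ : ∃ m, k = m + 1 := ⟨k - 1, by omega⟩
  obtain ⟨_, _, P, Q, h⟩ := exists_isEqualDisjointPathCover_from_start m
  obtain ⟨P', Q', h'⟩ :=
    exists_isEqualDisjointPathCover_succ h (parityFn_startP m) (parityFn_startQ m)
  exact ⟨P'.copy (lift_startP m) (lift_startP_eq_endP m),
    Q'.copy (lift_startQ m) (lift_startQ_eq_endQ m), h'.copy _ _ _ _⟩
end

section
/- For every odd integer n ≥ 3, the twisted cube TQ_n is Hamiltonian. -/
/-! A Hamiltonian path `p` of `TQ_{2k+1}` from `u` to `v`, with `P_{2k}(u) = 1`, lifts to one of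
`TQ_{2k+3}`: traverse `p` in the subcubes with leading bits `00, 10, 11, 01`, alternately forwards
and backwards. Consecutive subcubes are joined by flipping the leading bit at `v`, always an edge,
or the second bit at `u`, an edge because `u` has odd parity. The lifted path runs from `00u`,
again of odd parity, to `01u`, which is adjacent to `00u` for the same reason, so it closes up to a
Hamiltonian cycle. The induction starts from the path `1, 0` in `TQ_1 = K_2`. -/

open SimpleGraph

lemma SimpleGraph.Walk.IsHamiltonian.isHamiltonianCycle_cons {V : Type*} [DecidableEq V]
    {G : SimpleGraph V} {u v : V} {p : G.Walk u v} (hp : p.IsHamiltonian) (h : G.Adj v u)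
    (hlen : 1 < p.length) : (Walk.cons h p).IsHamiltonianCycle := by
  refine Walk.isHamiltonianCycle_iff_isCycle_and_support_count_tail_eq_one.mpr
    ⟨(Walk.cons_isCycle_iff p h).mpr ⟨hp.isPath, fun he => ?_⟩, fun a => by simpa using hp a⟩
  rw [Sym2.eq_swap] at he
  exact hlen.ne' (hp.isPath.length_eq_one_of_mem_edges he)

lemma parityFn_congr {m n : ℕ} {b : Fin m → Bool} {b' : Fin n → Bool} {i : ℕ}
    (hm : i < m) (hn : i < n)
    (h : ∀ j ≤ i, ∀ (hm : j < m) (hn : j < n), b ⟨j, hm⟩ = b' ⟨j, hn⟩) :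
    parityFn b i = parityFn b' i := by
  unfold parityFn
  congr 4
  refine List.filter_congr fun j hj => ?_
  have hj := List.mem_range.mp hj
  rw [dif_pos (by omega), dif_pos (by omega), h j (by omega)]

lemma parityFn_succ_of_eq_false {n : ℕ} {b : Fin n → Bool} {i : ℕ} (hi : i + 1 < n)
    (hb : b ⟨i + 1, hi⟩ = false) : parityFn b (i + 1) = parityFn b i := by
  unfold parityFn
  rw [List.range_succ (n := i + 1), List.filter_append, List.filter_singleton, dif_pos hi, hb,
    cond_false, List.append_nil]

section PrependBits

variable {k : ℕ}

def prependBits (a c : Bool) (x : Fin (2*k+1) → Bool) : Fin (2*(k+1)+1) → Bool :=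
  fun i => if h : i.val < 2*k+1 then x ⟨i.val, h⟩ else if i.val = 2*k+1 then c else a

@[simp]
lemma lowBits_prependBits (a c : Bool) (x : Fin (2*k+1) → Bool) :
    lowBits (prependBits a c x) = x := by
  funext i
  simp [lowBits, prependBits, i.isLt]

@[simp]
lemma prependBits_top (a c : Bool) (x : Fin (2*k+1) → Bool) :
    prependBits a c x ⟨2*k+2, by omega⟩ = a := by
  simp [prependBits]

@[simp]
lemma prependBits_snd (a c : Bool) (x : Fin (2*k+1) → Bool) :
    prependBits a c x ⟨2*k+1, by omega⟩ = c := by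
  simp [prependBits]

lemma prependBits_inj {a c a' c' : Bool} {x x' : Fin (2*k+1) → Bool} :
    prependBits a c x = prependBits a' c' x' ↔ a = a' ∧ c = c' ∧ x = x' := by
  refine ⟨fun h => ⟨?_, ?_, ?_⟩, by rintro ⟨rfl, rfl, rfl⟩; rfl⟩
  · simpa using congrFun h ⟨2*k+2, by omega⟩
  · simpa using congrFun h ⟨2*k+1, by omega⟩
  · simpa using congrArg lowBits h

lemma exists_eq_prependBits (b : Fin (2*(k+1)+1) → Bool) :
    ∃ a c x, b = prependBits a c x := by
  refine ⟨b ⟨2*k+2, by omega⟩, b ⟨2*k+1, by omega⟩, lowBits b, funext fun i => ?_⟩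
  simp only [prependBits, lowBits]
  split_ifs with h₁ h₂
  · rfl
  · exact congrArg b (Fin.ext h₂)
  · exact congrArg b (Fin.ext (by simp only; omega))

lemma parityFn_prependBits (a c : Bool) (x : Fin (2*k+1) → Bool) :
    parityFn (prependBits a c x) (2*k) = parityFn x (2*k) :=
  parityFn_congr (by omega) (by omega) fun j _ _ hj => by simp [prependBits, hj]

lemma parityFn_prependBits_false_false (x : Fin (2*k+1) → Bool) :
    parityFn (prependBits false false x) (2*(k+1)) = parityFn x (2*k) := by
  rw [← parityFn_prependBits false false x]
  change parityFn _ (2*k+1+1) = _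
  rw [parityFn_succ_of_eq_false (by omega), parityFn_succ_of_eq_false (by omega)]
  · simp [prependBits]
  · simp [prependBits]

lemma twistedCube_succ_adj {b b' : Fin (2*(k+1)+1) → Bool} :
    (TwistedCube (k+1)).Adj b b' ↔ b ≠ b' ∧
      ((b ⟨2*k+2, by omega⟩ = b' ⟨2*k+2, by omega⟩ ∧ b ⟨2*k+1, by omega⟩ = b' ⟨2*k+1, by omega⟩ ∧
        (TwistedCube k).Adj (lowBits b) (lowBits b')) ∨
       crossRel k b b' ∨ crossRel k b' b) :=
  Iff.rfl

def prependBitsHom (a c : Bool) : TwistedCube k →g TwistedCube (k+1) where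
  toFun := prependBits a c
  map_rel' h := twistedCube_succ_adj.mpr
    ⟨by simpa [prependBits_inj] using h.ne, Or.inl ⟨by simp, by simp, by simpa using h⟩⟩

lemma coe_prependBitsHom (a c : Bool) : ⇑(prependBitsHom (k := k) a c) = prependBits a c :=
  rfl

lemma twistedCube_adj_prependBits_of_ne_fst {a a' : Bool} (h : a ≠ a') (c : Bool)
    (x : Fin (2*k+1) → Bool) :
    (TwistedCube (k+1)).Adj (prependBitsHom a c x) (prependBitsHom a' c x) := by
  obtain rfl : a' = !a := by cases a <;> cases a' <;> simp_all
  rw [coe_prependBitsHom, coe_prependBitsHom]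
  exact twistedCube_succ_adj.mpr
    ⟨by simp [prependBits_inj], Or.inr (Or.inl ⟨by simp, Or.inl (by simp)⟩)⟩

lemma twistedCube_adj_prependBits_of_ne_snd (a : Bool) {c c' : Bool} (h : c ≠ c')
    {x : Fin (2*k+1) → Bool} (hx : parityFn x (2*k) = true) :
    (TwistedCube (k+1)).Adj (prependBitsHom a c x) (prependBitsHom a c' x) := by
  obtain rfl : c' = !c := by cases c <;> cases c' <;> simp_all
  rw [coe_prependBitsHom, coe_prependBitsHom]
  exact twistedCube_succ_adj.mpr ⟨by simp [prependBits_inj],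
    Or.inr (Or.inl ⟨by simp, Or.inr (Or.inr ⟨by rwa [parityFn_prependBits], by simp, by simp⟩)⟩)⟩

lemma count_prependBits_map (a c a' c' : Bool) (x : Fin (2*k+1) → Bool)
    (l : List (Fin (2*k+1) → Bool)) :
    (l.map (prependBits a' c')).count (prependBits a c x) =
      if a' = a ∧ c' = c then l.count x else 0 := by
  split_ifs with h
  · obtain ⟨rfl, rfl⟩ := h
    exact List.count_map_of_injective _ _ (fun _ _ h => (prependBits_inj.mp h).2.2) _
  · simp only [List.count_eq_zero, List.mem_map, prependBits_inj, not_exists, not_and]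
    exact fun _ _ ha hc _ => h ⟨ha, hc⟩

variable {u v : Fin (2*k+1) → Bool}

def cubeWalk (p : (TwistedCube k).Walk u v) (hu : parityFn u (2*k) = true) :
    (TwistedCube (k+1)).Walk (prependBitsHom false false u) (prependBitsHom false true u) :=
  (p.map (prependBitsHom false false)).append <|
    .cons (twistedCube_adj_prependBits_of_ne_fst (by decide) false v) <|
  (p.reverse.map (prependBitsHom true false)).append <|
    .cons (twistedCube_adj_prependBits_of_ne_snd true (by decide) hu) <|
  (p.map (prependBitsHom true true)).append <|
    .cons (twistedCube_adj_prependBits_of_ne_fst (by decide) true v) <|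
  p.reverse.map (prependBitsHom false true)

lemma support_cubeWalk (p : (TwistedCube k).Walk u v) (hu : parityFn u (2*k) = true) :
    (cubeWalk p hu).support =
      p.support.map (prependBits false false) ++ p.support.reverse.map (prependBits true false) ++
      p.support.map (prependBits true true) ++ p.support.reverse.map (prependBits false true) := by
  rw [cubeWalk, Walk.support_append, Walk.support_cons, List.tail_cons, Walk.support_append,
    Walk.support_cons, List.tail_cons, Walk.support_append, Walk.support_cons, List.tail_cons]
  simp only [Walk.support_map, Walk.support_reverse, List.append_assoc]
  simp only [coe_prependBitsHom, List.map_reverse]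

lemma length_cubeWalk (p : (TwistedCube k).Walk u v) (hu : parityFn u (2*k) = true) :
    (cubeWalk p hu).length = 4 * p.length + 3 := by
  rw [cubeWalk, Walk.length_append, Walk.length_cons, Walk.length_append, Walk.length_cons,
    Walk.length_append, Walk.length_cons]
  simp only [Walk.length_map, Walk.length_reverse]
  ring

lemma isHamiltonian_cubeWalk {p : (TwistedCube k).Walk u v} (hp : p.IsHamiltonian)
    (hu : parityFn u (2*k) = true) : (cubeWalk p hu).IsHamiltonian := by
  intro b
  obtain ⟨a, c, x, rfl⟩ := exists_eq_prependBits b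
  have := hp x
  cases a <;> cases c <;> simp [support_cubeWalk, count_prependBits_map, List.count_reverse, this]

end PrependBits

lemma twistedCube_exists_isHamiltonian_walk (k : ℕ) :
    ∃ (u v : Fin (2*k+1) → Bool) (p : (TwistedCube k).Walk u v),
      parityFn u (2*k) = true ∧ p.IsHamiltonian := by
  induction k with
  | zero =>
    have h : (TwistedCube 0).Adj (fun _ => true) (fun _ => false) := by
      simp [TwistedCube, funext_iff]
    refine ⟨_, _, .cons h .nil, by decide, ?_⟩
    simp only [Walk.IsHamiltonian, Walk.support_cons, Walk.support_nil]
    decide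
  | succ k ih =>
    obtain ⟨u, v, p, hu, hp⟩ := ih
    exact ⟨_, _, cubeWalk p hu, by rwa [coe_prependBitsHom, parityFn_prependBits_false_false],
      isHamiltonian_cubeWalk hp hu⟩

/-- For every odd `n = 2k+1 ≥ 3`, the twisted cube `TQ_n` is
Hamiltonian. -/
theorem twistedCube_isHamiltonian (k : ℕ) (hk : 1 ≤ k) :
    (TwistedCube k).IsHamiltonian := by
  obtain ⟨k, rfl⟩ : ∃ j, k = j + 1 := ⟨k - 1, by omega⟩
  obtain ⟨u, v, p, hu, hp⟩ := twistedCube_exists_isHamiltonian_walk k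
  refine fun _ => ⟨_, _, (isHamiltonian_cubeWalk hp hu).isHamiltonianCycle_cons
    (twistedCube_adj_prependBits_of_ne_snd false (by decide) hu) ?_⟩
  rw [length_cubeWalk]
  omega
end
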